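/- With R = ℤ/pℤ[t,t⁻¹] (p > 1) and B = [[-t⁻¹,1,0],[0,1,0],[0,1,-t]]: if v ∈ X₃ (i.e., ord(v₁) = n finite and ord(v₀), ord(v₂) ≥ n+2), then Bv ∈ X₂ (all coordinates of Bv are nonzero with equal lowest degree n); consequently Bⁿv ∈ X₁ for all n ≥ 3. -/

import Mathlib

open LaurentPolynomial

/-- lowest degree of `f` is at least `n` (ord 0 = +∞). -/
def ordGE {R : Type*} [CommRing R] (f : LaurentPolynomial R) (n : ℤ) : Prop :=
  ∀ m : ℤ, m < n → f.coeff m = 0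

/-- lowest degree of `f` is exactly `n`. -/
def ordEq {R : Type*} [CommRing R] (f : LaurentPolynomial R) (n : ℤ) : Prop :=
  f.coeff n ≠ 0 ∧ ordGE f n

noncomputable def Bm (p : ℕ) : Matrix (Fin 3) (Fin 3) (LaurentPolynomial (ZMod p)) :=
  !![-T (-1), 1, 0;
     0, 1, 0;
     0, 1, -T 1]

open Matrix

/-
Multiplication by `T a` shifts lowest degrees by `a`, and a sum has lowest degree `n` when one
summand does and the other has larger lowest degree. For `v ∈ X₃` the term `v₁` therefore dominates
every coordinate of `B v`, which puts `B v` in `X₂` at order `n`. From then on coordinate 0 of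
`Bᵏ v` dominates: each further application of `B` lowers its order by one (through `-t⁻¹ · w₀`),
while coordinates 1 and 2 stay of order at least `n`. After `k ≥ 3` steps the gap is at least two.
-/

namespace LaurentPolynomial

variable {R : Type*} [CommRing R]

theorem coeff_T_mul (a m : ℤ) (f : R[T;T⁻¹]) : (T a * f).coeff m = f.coeff (m - a) := by
  rw [show (T a : R[T;T⁻¹]) = AddMonoidAlgebra.single a 1 from rfl,
    AddMonoidAlgebra.coeff_single_mul_apply, one_mul, neg_add_eq_sub]

end LaurentPolynomial

section Order

variable {R : Type*} [CommRing R] {f g : R[T;T⁻¹]} {n r : ℤ}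

theorem ordGE.mono (h : ordGE f n) (hrn : r ≤ n) : ordGE f r :=
  fun m hm => h m (hm.trans_le hrn)

theorem ordGE.neg (h : ordGE f n) : ordGE (-f) n := by
  intro m hm
  rw [AddMonoidAlgebra.coeff_neg, Finsupp.neg_apply, h m hm, neg_zero]

theorem ordGE.add (hf : ordGE f n) (hg : ordGE g n) : ordGE (f + g) n := by
  intro m hm
  rw [AddMonoidAlgebra.coeff_add, Finsupp.add_apply, hf m hm, hg m hm, add_zero]

theorem ordGE.sub (hf : ordGE f n) (hg : ordGE g n) : ordGE (f - g) n := by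
  rw [sub_eq_add_neg]
  exact hf.add hg.neg

theorem ordGE.T_mul (h : ordGE f n) (a : ℤ) : ordGE (T a * f) (n + a) := by
  intro m hm
  rw [coeff_T_mul]
  exact h _ (by omega)

theorem ordEq.neg (h : ordEq f n) : ordEq (-f) n := by
  refine ⟨?_, h.2.neg⟩
  rw [AddMonoidAlgebra.coeff_neg, Finsupp.neg_apply, neg_ne_zero]
  exact h.1

theorem ordEq.T_mul (h : ordEq f n) (a : ℤ) : ordEq (T a * f) (n + a) := by
  refine ⟨?_, h.2.T_mul a⟩
  rw [coeff_T_mul, add_sub_cancel_right]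
  exact h.1

theorem ordEq.add_of_ordGE (hf : ordEq f n) (hg : ordGE g r) (hnr : n < r) :
    ordEq (f + g) n := by
  refine ⟨?_, hf.2.add (hg.mono hnr.le)⟩
  rw [AddMonoidAlgebra.coeff_add, Finsupp.add_apply, hg n hnr, add_zero]
  exact hf.1

theorem ordEq.sub_of_ordGE (hf : ordEq f n) (hg : ordGE g r) (hnr : n < r) :
    ordEq (f - g) n := by
  rw [sub_eq_add_neg]
  exact hf.add_of_ordGE hg.neg hnr

end Order

section Bm

variable {p : ℕ} (w : Fin 3 → LaurentPolynomial (ZMod p))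

theorem Bm_mulVec_zero : (Bm p *ᵥ w) 0 = w 1 - T (-1) * w 0 := by
  simp [Bm, mulVec, dotProduct, Fin.sum_univ_three, sub_eq_neg_add, T_mul]

theorem Bm_mulVec_one : (Bm p *ᵥ w) 1 = w 1 := by
  simp [Bm, mulVec, dotProduct, Fin.sum_univ_three]

theorem Bm_mulVec_two : (Bm p *ᵥ w) 2 = w 1 - T 1 * w 2 := by
  simp [Bm, mulVec, dotProduct, Fin.sum_univ_three, sub_eq_add_neg, T_mul]

variable {w}

theorem Bm_mulVec_ordEq {n : ℤ} (h1 : ordEq (w 1) n) (h0 : ordGE (w 0) (n + 2))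
    (h2 : ordGE (w 2) (n + 2)) (i : Fin 3) : ordEq ((Bm p *ᵥ w) i) n := by
  fin_cases i
  · exact (Bm_mulVec_zero w).symm ▸ h1.sub_of_ordGE (h0.T_mul (-1)) (by omega)
  · exact (Bm_mulVec_one w).symm ▸ h1
  · exact (Bm_mulVec_two w).symm ▸ h1.sub_of_ordGE (h2.T_mul 1) (by omega)

theorem Bm_mulVec_pivot {m r : ℤ} (hmr : m ≤ r) (h0 : ordEq (w 0) m) (h1 : ordGE (w 1) r)
    (h2 : ordGE (w 2) r) :
    ordEq ((Bm p *ᵥ w) 0) (m - 1) ∧ ordGE ((Bm p *ᵥ w) 1) r ∧ ordGE ((Bm p *ᵥ w) 2) r := by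
  refine ⟨?_, (Bm_mulVec_one w).symm ▸ h1, ?_⟩
  · rw [Bm_mulVec_zero, ← neg_add_eq_sub, sub_eq_add_neg]
    exact (h0.T_mul (-1)).neg.add_of_ordGE h1 (by omega)
  · rw [Bm_mulVec_two]
    exact h1.sub ((h2.T_mul 1).mono (by omega))

theorem Bm_pow_mulVec_pivot {m r : ℤ} (hmr : m ≤ r) (h0 : ordEq (w 0) m) (h1 : ordGE (w 1) r)
    (h2 : ordGE (w 2) r) (k : ℕ) :
    ordEq ((Bm p ^ k *ᵥ w) 0) (m - k) ∧ ordGE ((Bm p ^ k *ᵥ w) 1) r ∧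
      ordGE ((Bm p ^ k *ᵥ w) 2) r := by
  induction k with
  | zero => simpa using ⟨h0, h1, h2⟩
  | succ k ih =>
    obtain ⟨e0, g1, g2⟩ := ih
    rw [pow_succ', ← mulVec_mulVec, Nat.cast_succ, ← sub_sub]
    exact Bm_mulVec_pivot (by omega) e0 g1 g2

end Bm

theorem B_on_X3_general (p : ℕ)
    (v : Fin 3 → LaurentPolynomial (ZMod p)) (n : ℤ)
    (h1 : ordEq (v 1) n) (h0 : ordGE (v 0) (n + 2)) (h2 : ordGE (v 2) (n + 2)) :
    (∀ i : Fin 3, ordEq ((Bm p).mulVec v i) n) ∧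
    (∀ k : ℕ, 3 ≤ k → ∃ m : ℤ, ordEq (((Bm p) ^ k).mulVec v 0) m ∧
      ordGE (((Bm p) ^ k).mulVec v 1) (m + 2) ∧
      ordGE (((Bm p) ^ k).mulVec v 2) (m + 2)) := by
  have hBv := Bm_mulVec_ordEq h1 h0 h2
  refine ⟨hBv, fun k hk => ?_⟩
  obtain ⟨j, rfl⟩ : ∃ j, k = j + 1 := ⟨k - 1, by omega⟩
  obtain ⟨e0, g1, g2⟩ := Bm_pow_mulVec_pivot le_rfl (hBv 0) (hBv 1).2 (hBv 2).2 j
  rw [pow_succ, ← mulVec_mulVec]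
  exact ⟨n - j, e0, g1.mono (by omega), g2.mono (by omega)⟩

/-- If v ∈ X₃ (ord(v₁) = n, ord(v₀), ord(v₂) ≥ n+2), then Bv ∈ X₂ with all
lowest degrees equal to n; consequently Bⁿv ∈ X₁ for all n ≥ 3. -/
theorem B_on_X3 (p : ℕ) [Fact (1 < p)]
    (v : Fin 3 → LaurentPolynomial (ZMod p)) (n : ℤ)
    (h1 : ordEq (v 1) n) (h0 : ordGE (v 0) (n + 2)) (h2 : ordGE (v 2) (n + 2)) :
    (∀ i : Fin 3, ordEq ((Bm p).mulVec v i) n) ∧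
    (∀ k : ℕ, 3 ≤ k → ∃ m : ℤ, ordEq (((Bm p) ^ k).mulVec v 0) m ∧
      ordGE (((Bm p) ^ k).mulVec v 1) (m + 2) ∧
      ordGE (((Bm p) ^ k).mulVec v 2) (m + 2)) :=
  B_on_X3_general p v n h1 h0 h2
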